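/- arXiv:1602.05677 — 7 statements merged into one kernel-verified Lean document; each statement's English description precedes it below -/
import Mathlib

section
/- Let Ψ : (0, ∞) → (0, ∞) be an increasing function such that lim_{x→∞} Ψ(x)/Ψ(x−1) = ∞. Then liminf_{n→∞} Ψ(n) · (Σ_{k=n}^∞ 1/Ψ(k)²) / (Σ_{k=n}^∞ 1/Ψ(k)) > 0. -/
open Filter
open scoped Topology

/-- If `Ψ : (0,∞) → (0,∞)` is increasing with `Ψ(x)/Ψ(x−1) → ∞` as `x → ∞`, then
`liminf_{n→∞} Ψ(n) · (Σ_{k=n}^∞ 1/Ψ(k)²) / (Σ_{k=n}^∞ 1/Ψ(k)) > 0`. -/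
theorem liminf_ratio_tsum_inv_sq_pos_of_superexp
    (Ψ : ℝ → ℝ) (hpos : ∀ x > (0 : ℝ), 0 < Ψ x)
    (hmono : StrictMonoOn Ψ (Set.Ioi 0))
    (hsuper : Tendsto (fun x : ℝ => Ψ x / Ψ (x - 1)) atTop atTop) :
    0 < Filter.liminf (fun n : ℕ =>
        Ψ n * (∑' k : ℕ, 1 / (Ψ ((n + k : ℕ) : ℝ)) ^ 2)
          / (∑' k : ℕ, 1 / Ψ ((n + k : ℕ) : ℝ))) atTop := by
  have hev := (hsuper.eventually_ge_atTop 2)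
  rw [eventually_atTop] at hev
  obtain ⟨M, hM⟩ := hev
  set N : ℕ := max ⌈M⌉₊ 2 with hN
  have hN2 : (2 : ℝ) ≤ (N : ℝ) := by
    have : (2 : ℕ) ≤ N := le_max_right _ _
    exact_mod_cast this
  have hMN : M ≤ (N : ℝ) := (Nat.le_ceil M).trans (by exact_mod_cast le_max_left ⌈M⌉₊ 2)
  have hstep : ∀ x : ℝ, (N : ℝ) ≤ x → 2 * Ψ (x - 1) ≤ Ψ x := by
    intro x hx
    have hx1 : (0 : ℝ) < x - 1 := by linarith
    have h2 := hM x (hMN.trans hx)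
    rw [le_div_iff₀ (hpos _ hx1)] at h2
    linarith
  have hgrow : ∀ n : ℕ, N ≤ n → ∀ k : ℕ, 2 ^ k * Ψ n ≤ Ψ ((n + k : ℕ) : ℝ) := by
    intro n hn k
    have hnR : (N : ℝ) ≤ (n : ℝ) := by exact_mod_cast hn
    induction k with
    | zero => simp
    | succ k ih =>
      have h1 : (N : ℝ) ≤ ((n + (k + 1) : ℕ) : ℝ) := by
        push_cast
        have : (0 : ℝ) ≤ (k : ℝ) := Nat.cast_nonneg k
        linarith
      have h2 := hstep _ h1
      have heq : ((n + (k + 1) : ℕ) : ℝ) - 1 = ((n + k : ℕ) : ℝ) := by push_cast; ring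
      rw [heq] at h2
      calc 2 ^ (k + 1) * Ψ n = 2 * (2 ^ k * Ψ n) := by ring
        _ ≤ 2 * Ψ ((n + k : ℕ) : ℝ) := by linarith
        _ ≤ Ψ ((n + (k + 1) : ℕ) : ℝ) := h2
  -- main eventual bounds
  have key : ∀ n : ℕ, N ≤ n →
      (1 : ℝ) / 2 ≤ Ψ n * (∑' k : ℕ, 1 / (Ψ ((n + k : ℕ) : ℝ)) ^ 2)
          / (∑' k : ℕ, 1 / Ψ ((n + k : ℕ) : ℝ)) ∧
      Ψ n * (∑' k : ℕ, 1 / (Ψ ((n + k : ℕ) : ℝ)) ^ 2)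
          / (∑' k : ℕ, 1 / Ψ ((n + k : ℕ) : ℝ)) ≤ 2 := by
    intro n hn
    have hnR : (N : ℝ) ≤ (n : ℝ) := by exact_mod_cast hn
    have hnpos : (0 : ℝ) < (n : ℝ) := by linarith
    have ha : 0 < Ψ (n : ℝ) := hpos _ hnpos
    have hpk : ∀ k : ℕ, 0 < Ψ ((n + k : ℕ) : ℝ) := by
      intro k
      apply hpos
      push_cast
      have : (0 : ℝ) ≤ (k : ℝ) := Nat.cast_nonneg k
      linarith
    have hg : ∀ k : ℕ, 2 ^ k * Ψ n ≤ Ψ ((n + k : ℕ) : ℝ) := hgrow n hn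
    have hle1 : ∀ k : ℕ, 1 / Ψ ((n + k : ℕ) : ℝ) ≤ (1 / 2) ^ k * (1 / Ψ n) := by
      intro k
      have h2k : (0 : ℝ) < 2 ^ k * Ψ n := by positivity
      have := one_div_le_one_div_of_le h2k (hg k)
      calc 1 / Ψ ((n + k : ℕ) : ℝ) ≤ 1 / (2 ^ k * Ψ n) := this
        _ = (1 / 2) ^ k * (1 / Ψ n) := by
            rw [div_pow, one_pow, div_mul_div_comm, one_mul]
    have hle2 : ∀ k : ℕ, 1 / (Ψ ((n + k : ℕ) : ℝ)) ^ 2 ≤ (1 / 2) ^ k * (1 / Ψ n ^ 2) := by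
      intro k
      have h2k : (0 : ℝ) < 2 ^ k * Ψ n ^ 2 := by positivity
      have hsq : 2 ^ k * Ψ n ^ 2 ≤ (Ψ ((n + k : ℕ) : ℝ)) ^ 2 := by
        have h1 : (2 : ℝ) ^ k * Ψ n ≤ Ψ ((n + k : ℕ) : ℝ) := hg k
        have h2 : (1 : ℝ) ≤ 2 ^ k := one_le_pow₀ (by norm_num)
        have h4 : (2 : ℝ) ^ k ≤ 2 ^ k * 2 ^ k := le_mul_of_one_le_left (by positivity) h2
        calc 2 ^ k * Ψ n ^ 2 ≤ (2 ^ k * 2 ^ k) * Ψ n ^ 2 :=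
              mul_le_mul_of_nonneg_right h4 (sq_nonneg _)
          _ = (2 ^ k * Ψ n) ^ 2 := by ring
          _ ≤ (Ψ ((n + k : ℕ) : ℝ)) ^ 2 := pow_le_pow_left₀ (by positivity) h1 2
      have := one_div_le_one_div_of_le h2k hsq
      calc 1 / (Ψ ((n + k : ℕ) : ℝ)) ^ 2 ≤ 1 / (2 ^ k * Ψ n ^ 2) := this
        _ = (1 / 2) ^ k * (1 / Ψ n ^ 2) := by
            rw [div_pow, one_pow, div_mul_div_comm, one_mul]
    have hgeom : Summable (fun k : ℕ => (1 / 2 : ℝ) ^ k) :=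
      summable_geometric_of_lt_one (by norm_num) (by norm_num)
    have hs1 : Summable (fun k : ℕ => 1 / Ψ ((n + k : ℕ) : ℝ)) :=
      Summable.of_nonneg_of_le (fun k => by have := hpk k; positivity) hle1 (hgeom.mul_right _)
    have hs2 : Summable (fun k : ℕ => 1 / (Ψ ((n + k : ℕ) : ℝ)) ^ 2) :=
      Summable.of_nonneg_of_le (fun k => by have := hpk k; positivity) hle2 (hgeom.mul_right _)
    set S1 := ∑' k : ℕ, 1 / Ψ ((n + k : ℕ) : ℝ) with hS1def
    set S2 := ∑' k : ℕ, 1 / (Ψ ((n + k : ℕ) : ℝ)) ^ 2 with hS2def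
    have hgeomsum : ∑' k : ℕ, (1 / 2 : ℝ) ^ k = 2 := by
      rw [tsum_geometric_of_lt_one (by norm_num) (by norm_num)]; norm_num
    have hS1ub : S1 ≤ 2 * (1 / Ψ n) := by
      have := Summable.tsum_le_tsum hle1 hs1 (hgeom.mul_right _)
      rwa [tsum_mul_right, hgeomsum] at this
    have hS2ub : S2 ≤ 2 * (1 / Ψ n ^ 2) := by
      have := Summable.tsum_le_tsum hle2 hs2 (hgeom.mul_right _)
      rwa [tsum_mul_right, hgeomsum] at this
    have hS1lb : 1 / Ψ (n : ℝ) ≤ S1 := by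
      have h0 : 1 / Ψ ((n + 0 : ℕ) : ℝ) ≤ S1 :=
        Summable.le_tsum hs1 0 (fun k _ => by have := hpk k; positivity)
      simpa using h0
    have hS2lb : 1 / Ψ (n : ℝ) ^ 2 ≤ S2 := by
      have h0 : 1 / (Ψ ((n + 0 : ℕ) : ℝ)) ^ 2 ≤ S2 :=
        Summable.le_tsum hs2 0 (fun k _ => by have := hpk k; positivity)
      simpa using h0
    have hS1pos : 0 < S1 := lt_of_lt_of_le (by positivity) hS1lb
    have hid1 : Ψ (n : ℝ) * (1 / Ψ (n : ℝ) ^ 2) = 1 / Ψ (n : ℝ) := by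
      field_simp
    constructor
    · rw [le_div_iff₀ hS1pos]
      have h1 : (1 : ℝ) / 2 * S1 ≤ 1 / Ψ (n : ℝ) := by linarith
      have h2 : 1 / Ψ (n : ℝ) ≤ Ψ (n : ℝ) * S2 := by
        rw [← hid1]
        exact mul_le_mul_of_nonneg_left hS2lb ha.le
      linarith
    · rw [div_le_iff₀ hS1pos]
      have h1 : Ψ (n : ℝ) * S2 ≤ 2 * (1 / Ψ (n : ℝ)) := by
        have := mul_le_mul_of_nonneg_left hS2ub ha.le
        calc Ψ (n : ℝ) * S2 ≤ Ψ (n : ℝ) * (2 * (1 / Ψ n ^ 2)) := this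
          _ = 2 * (Ψ (n : ℝ) * (1 / Ψ n ^ 2)) := by ring
          _ = 2 * (1 / Ψ (n : ℝ)) := by rw [hid1]
      linarith
  have hlb : ∀ᶠ n : ℕ in atTop, (1 : ℝ) / 2 ≤ Ψ n * (∑' k : ℕ, 1 / (Ψ ((n + k : ℕ) : ℝ)) ^ 2)
          / (∑' k : ℕ, 1 / Ψ ((n + k : ℕ) : ℝ)) :=
    eventually_atTop.mpr ⟨N, fun n hn => (key n hn).1⟩
  have hub : ∀ᶠ n : ℕ in atTop, Ψ n * (∑' k : ℕ, 1 / (Ψ ((n + k : ℕ) : ℝ)) ^ 2)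
          / (∑' k : ℕ, 1 / Ψ ((n + k : ℕ) : ℝ)) ≤ 2 :=
    eventually_atTop.mpr ⟨N, fun n hn => (key n hn).2⟩
  have hcb := isCoboundedUnder_ge_of_eventually_le (atTop : Filter ℕ) hub
  exact lt_of_lt_of_le (by norm_num : (0 : ℝ) < 1 / 2) (le_liminf_of_le hcb hlb)
end

section
/- Let Ψ : (0, ∞) → (0, ∞) be an increasing, twice continuously differentiable function such that ∫_1^∞ du/Ψ(u) < ∞, liminf_{x→∞} Ψ'(x) = ∞, the limit lim_{x→∞} Ψ(x)/Ψ(x−1) exists in [1, ∞), and the limit lim_{x→∞} Ψ''(x)Ψ(x)/Ψ'(x)² exists and is positive. Then liminf_{n→∞} Ψ(n) · (Σ_{k=n}^∞ 1/Ψ(k)²) / (Σ_{k=n}^∞ 1/Ψ(k)) > 0. -/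
open Filter
open scoped Topology

/-!
Let `r = Ψ'' Ψ / Ψ'²`; eventually `δ ≤ r ≤ M` with `0 < δ ≤ M`. Since `(1 / Ψ')' = -r / Ψ ≤ -δ / Ψ`,
telescoping over unit steps gives `∑_{k ≥ 0} 1 / Ψ(x + k) ≤ 1 / Ψ(x) + 1 / (δ Ψ'(x))`. Since
`(1 / (Ψ Ψ'))' = -(1 + r) / Ψ² ≥ -(1 + M) / Ψ²` and `Ψ Ψ' → ∞`, likewise
`∑_{k ≥ 0} 1 / Ψ(x + k)² ≥ 1 / ((1 + M) Ψ(x) Ψ'(x))`, and this sum is also at least its first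
term `1 / Ψ(x)²`. Together these bound the ratio below by `δ / (2 (1 + M))`. Monotonicity of `Ψ`
bounds the ratio above by `1`, so that its `liminf` is not a junk value.
-/

open Set

theorem image_sub_le_mul_sub_of_hasDerivAt_le {g g' : ℝ → ℝ} {x y C : ℝ} (hxy : x ≤ y)
    (hg : ∀ s ∈ Icc x y, HasDerivAt g (g' s) s) (hle : ∀ s ∈ Icc x y, g' s ≤ C) :
    g y - g x ≤ C * (y - x) := by
  have hint : ∀ s ∈ interior (Icc x y), s ∈ Icc x y := fun s hs => interior_subset hs
  refine (convex_Icc x y).image_sub_le_mul_sub_of_deriv_le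
    (fun s hs => (hg s hs).continuousAt.continuousWithinAt)
    (fun s hs => (hg s (hint s hs)).differentiableAt.differentiableWithinAt)
    (fun s hs => ?_) x (left_mem_Icc.2 hxy) y (right_mem_Icc.2 hxy) hxy
  rw [(hg s (hint s hs)).deriv]
  exact hle s (hint s hs)

theorem ContDiffOn.hasDerivAt_and_hasDerivAt_deriv {f : ℝ → ℝ} {s : Set ℝ}
    (hf : ContDiffOn ℝ 2 f s) (hs : IsOpen s) {x : ℝ} (hx : x ∈ s) :
    HasDerivAt f (deriv f x) x ∧ HasDerivAt (deriv f) (deriv (deriv f) x) x :=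
  have hf' : ContDiffOn ℝ 1 (deriv f) s := hf.deriv_of_isOpen hs (by norm_num)
  ⟨((hf.differentiableOn (by norm_num) x hx).differentiableAt (hs.mem_nhds hx)).hasDerivAt,
    ((hf'.differentiableOn one_ne_zero x hx).differentiableAt (hs.mem_nhds hx)).hasDerivAt⟩

section

variable {f f' f'' : ℝ → ℝ} {a : ℝ}

theorem monotoneOn_Ici_of_hasDerivAt_pos (hf : ∀ x ≥ a, HasDerivAt f (f' x) x)
    (hf'pos : ∀ x ≥ a, 0 < f' x) : MonotoneOn f (Ici a) := by
  refine monotoneOn_of_deriv_nonneg (convex_Ici a)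
    (fun x hx => (hf x hx).continuousAt.continuousWithinAt)
    (fun x hx => (hf x (interior_subset hx)).differentiableAt.differentiableWithinAt)
    (fun x hx => ?_)
  rw [(hf x (interior_subset hx)).deriv]
  exact (hf'pos x (interior_subset hx)).le

theorem div_le_inv_sub_inv_of_le_mul_div_sq {δ x : ℝ} (hf : ∀ x ≥ a, HasDerivAt f (f' x) x)
    (hf' : ∀ x ≥ a, HasDerivAt f' (f'' x) x) (hfpos : ∀ x ≥ a, 0 < f x)
    (hf'pos : ∀ x ≥ a, 0 < f' x) (hδ : 0 ≤ δ) (hr : ∀ x ≥ a, δ ≤ f'' x * f x / f' x ^ 2)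
    (hx : a ≤ x) : δ / f (x + 1) ≤ (f' x)⁻¹ - (f' (x + 1))⁻¹ := by
  have hmono := monotoneOn_Ici_of_hasDerivAt_pos hf hf'pos
  have key := image_sub_le_mul_sub_of_hasDerivAt_le (g := fun s => (f' s)⁻¹)
    (g' := fun s => -f'' s / f' s ^ 2) (y := x + 1) (C := -δ / f (x + 1)) (by linarith)
    (fun s hs => (hf' s (hx.trans hs.1)).inv (hf'pos s (hx.trans hs.1)).ne')
    (fun s hs => by
      have hs' : a ≤ s := hx.trans hs.1
      have hfs := hfpos s hs'
      calc -f'' s / f' s ^ 2 = -(f'' s * f s / f' s ^ 2) / f s := by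
            field_simp
        _ ≤ -δ / f s := by gcongr; exact hr s hs'
        _ ≤ -δ / f (x + 1) := by
            rw [neg_div, neg_div, neg_le_neg_iff]
            exact div_le_div_of_nonneg_left hδ hfs (hmono hs' (show a ≤ x + 1 by linarith) hs.2))
  simp only [add_sub_cancel_left, mul_one, neg_div] at key
  linarith

theorem inv_mul_sub_inv_mul_le_of_mul_div_sq_le {M x : ℝ} (hf : ∀ x ≥ a, HasDerivAt f (f' x) x)
    (hf' : ∀ x ≥ a, HasDerivAt f' (f'' x) x) (hfpos : ∀ x ≥ a, 0 < f x)
    (hf'pos : ∀ x ≥ a, 0 < f' x) (hM : 0 ≤ 1 + M) (hr : ∀ x ≥ a, f'' x * f x / f' x ^ 2 ≤ M)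
    (hx : a ≤ x) : (f x * f' x)⁻¹ - (f (x + 1) * f' (x + 1))⁻¹ ≤ (1 + M) / f x ^ 2 := by
  have hmono := monotoneOn_Ici_of_hasDerivAt_pos hf hf'pos
  have key := image_sub_le_mul_sub_of_hasDerivAt_le (g := fun s => -(f s * f' s)⁻¹)
    (g' := fun s => (f' s * f' s + f s * f'' s) / (f s * f' s) ^ 2) (y := x + 1)
    (C := (1 + M) / f x ^ 2) (by linarith)
    (fun s hs => by
      have hs' : a ≤ s := hx.trans hs.1
      have := (((hf s hs').fun_mul (hf' s hs')).fun_inv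
        (mul_pos (hfpos s hs') (hf'pos s hs')).ne').fun_neg
      simpa only [neg_div, neg_neg] using this)
    (fun s hs => by
      have hs' : a ≤ s := hx.trans hs.1
      have hfs := hfpos s hs'
      have hf's := hf'pos s hs'
      calc (f' s * f' s + f s * f'' s) / (f s * f' s) ^ 2
          = (1 + f'' s * f s / f' s ^ 2) / f s ^ 2 := by
            field_simp
        _ ≤ (1 + M) / f s ^ 2 := by gcongr; exact hr s hs'
        _ ≤ (1 + M) / f x ^ 2 := by
            have := hfpos x hx
            gcongr
            exact hmono hx hs' hs.1)
  simp only [add_sub_cancel_left, mul_one] at key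
  linarith

theorem mul_one_div_sq_comp_add_le {x : ℝ} (hfpos : ∀ y ≥ x, 0 < f y)
    (hmono : MonotoneOn f (Ici x)) (k : ℕ) : f x * (1 / f (x + k) ^ 2) ≤ 1 / f (x + k) := by
  have hxk : x ≤ x + k := le_add_of_nonneg_right k.cast_nonneg
  have hfx := hfpos x le_rfl
  have hfxk := hfpos (x + k) hxk
  rw [mul_one_div, div_le_div_iff₀ (by positivity) hfxk, sq, one_mul]
  exact mul_le_mul_of_nonneg_right (hmono self_mem_Ici hxk hxk) hfxk.le

theorem summable_one_div_sq_comp_add {x : ℝ} (hfpos : ∀ y ≥ x, 0 < f y)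
    (hmono : MonotoneOn f (Ici x)) (hs : Summable fun k : ℕ => 1 / f (x + k)) :
    Summable fun k : ℕ => 1 / f (x + k) ^ 2 := by
  have hfx := hfpos x le_rfl
  refine (hs.mul_left (f x)⁻¹).of_nonneg_of_le (fun k => by positivity) fun k => ?_
  rw [← div_eq_inv_mul, le_div_iff₀' hfx]
  exact mul_one_div_sq_comp_add_le hfpos hmono k

theorem mul_tsum_one_div_sq_div_tsum_one_div_le_one {x : ℝ} (hfpos : ∀ y ≥ x, 0 < f y)
    (hmono : MonotoneOn f (Ici x)) :
    f x * (∑' k : ℕ, 1 / f (x + k) ^ 2) / ∑' k : ℕ, 1 / f (x + k) ≤ 1 := by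
  by_cases hs : Summable fun k : ℕ => 1 / f (x + k)
  · refine div_le_one_of_le₀ ?_ (tsum_nonneg fun k => ?_)
    · rw [← tsum_mul_left]
      exact (summable_one_div_sq_comp_add hfpos hmono hs).mul_left _ |>.tsum_le_tsum
        (mul_one_div_sq_comp_add_le hfpos hmono) hs
    · exact (one_div_pos.2 (hfpos _ (le_add_of_nonneg_right k.cast_nonneg))).le
  · rw [tsum_eq_zero_of_not_summable hs, div_zero]
    exact zero_le_one

theorem sum_range_one_div_comp_add_le {δ x : ℝ} (hf : ∀ x ≥ a, HasDerivAt f (f' x) x)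
    (hf' : ∀ x ≥ a, HasDerivAt f' (f'' x) x) (hfpos : ∀ x ≥ a, 0 < f x)
    (hf'pos : ∀ x ≥ a, 0 < f' x) (hδ : 0 < δ) (hr : ∀ x ≥ a, δ ≤ f'' x * f x / f' x ^ 2)
    (hx : a ≤ x) (m : ℕ) :
    ∑ k ∈ Finset.range m, 1 / f (x + k) ≤ 1 / f x + 1 / (δ * f' x) := by
  have hxk (k : ℕ) : a ≤ x + k := hx.trans (le_add_of_nonneg_right k.cast_nonneg)
  set T : ℕ → ℝ := fun k => (f' (x + k))⁻¹ / δ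
  have hstep (k : ℕ) : 1 / f (x + (k + 1 : ℕ)) ≤ T k - T (k + 1) := by
    have := div_le_inv_sub_inv_of_le_mul_div_sq hf hf' hfpos hf'pos hδ.le hr (hxk k)
    simp only [T]
    push_cast
    rw [← add_assoc, ← sub_div, le_div_iff₀ hδ, one_div_mul_eq_div]
    exact this
  cases m with
  | zero =>
    have := hfpos x hx
    have := hf'pos x hx
    simp only [Finset.range_zero, Finset.sum_empty]
    positivity
  | succ m =>
    rw [Finset.sum_range_succ']
    have htel := (Finset.sum_le_sum fun k _ => hstep k).trans_eq (Finset.sum_range_sub' T m)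
    have hT0 : T 0 = 1 / (δ * f' x) := by
      simp only [T, Nat.cast_zero, add_zero]
      ring
    have hTm : 0 ≤ T m := div_nonneg (inv_nonneg.2 (hf'pos _ (hxk m)).le) hδ.le
    simp only [Nat.cast_zero, add_zero]
    linarith

theorem div_le_tsum_one_div_sq_comp_add {M x : ℝ} (hf : ∀ x ≥ a, HasDerivAt f (f' x) x)
    (hf' : ∀ x ≥ a, HasDerivAt f' (f'' x) x) (hfpos : ∀ x ≥ a, 0 < f x)
    (hf'pos : ∀ x ≥ a, 0 < f' x) (hf'top : Tendsto f' atTop atTop) (hM : 0 < 1 + M)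
    (hr : ∀ x ≥ a, f'' x * f x / f' x ^ 2 ≤ M) (hx : a ≤ x)
    (hs : Summable fun k : ℕ => 1 / f (x + k) ^ 2) :
    1 / ((1 + M) * (f x * f' x)) ≤ ∑' k : ℕ, 1 / f (x + k) ^ 2 := by
  have hxk (k : ℕ) : a ≤ x + k := hx.trans (le_add_of_nonneg_right k.cast_nonneg)
  have hmono := monotoneOn_Ici_of_hasDerivAt_pos hf hf'pos
  set T : ℕ → ℝ := fun k => (f (x + k) * f' (x + k))⁻¹
  have hstep (k : ℕ) : (T k - T (k + 1)) / (1 + M) ≤ 1 / f (x + k) ^ 2 := by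
    have := inv_mul_sub_inv_mul_le_of_mul_div_sq_le hf hf' hfpos hf'pos hM.le hr (hxk k)
    simp only [T]
    push_cast
    rw [← add_assoc, div_le_iff₀ hM, one_div_mul_eq_div]
    exact this
  have hT : Tendsto T atTop (𝓝 0) := by
    have hf'k : Tendsto (fun k : ℕ => f x * f' (x + k)) atTop atTop :=
      (hf'top.comp (tendsto_atTop_add_const_left _ x tendsto_natCast_atTop_atTop)).const_mul_atTop
        (hfpos x hx)
    refine (tendsto_atTop_mono (fun k => ?_) hf'k).inv_tendsto_atTop
    exact mul_le_mul_of_nonneg_right (hmono hx (hxk k) (le_add_of_nonneg_right k.cast_nonneg))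
      (hf'pos _ (hxk k)).le
  have hlim : Tendsto (fun m => (T 0 - T m) / (1 + M)) atTop (𝓝 (T 0 / (1 + M))) := by
    simpa using (tendsto_const_nhds.sub hT).div_const (1 + M)
  have hT0 : T 0 / (1 + M) = 1 / ((1 + M) * (f x * f' x)) := by
    simp only [T, Nat.cast_zero, add_zero]
    rw [one_div, mul_inv (1 + M), inv_mul_eq_div]
  rw [← hT0]
  refine le_of_tendsto_of_tendsto' hlim hs.hasSum.tendsto_sum_nat fun m => ?_
  rw [← Finset.sum_range_sub', Finset.sum_div]
  exact Finset.sum_le_sum fun k _ => hstep k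

theorem div_two_mul_le_mul_tsum_one_div_sq_div_tsum_one_div {δ M x : ℝ}
    (hf : ∀ x ≥ a, HasDerivAt f (f' x) x) (hf' : ∀ x ≥ a, HasDerivAt f' (f'' x) x)
    (hfpos : ∀ x ≥ a, 0 < f x) (hf'pos : ∀ x ≥ a, 0 < f' x) (hf'top : Tendsto f' atTop atTop)
    (hδ : 0 < δ) (hr : ∀ x ≥ a, δ ≤ f'' x * f x / f' x ^ 2 ∧ f'' x * f x / f' x ^ 2 ≤ M)
    (hx : a ≤ x) :
    δ / (2 * (1 + M)) ≤ f x * (∑' k : ℕ, 1 / f (x + k) ^ 2) / ∑' k : ℕ, 1 / f (x + k) := by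
  have hmono := (monotoneOn_Ici_of_hasDerivAt_pos hf hf'pos).mono (Ici_subset_Ici.2 hx)
  have hfpos_x : ∀ y ≥ x, 0 < f y := fun y hy => hfpos y (hx.trans hy)
  have hP := hfpos x hx
  have hQ := hf'pos x hx
  have hM : 0 < 1 + M := by linarith [(hr x hx).1.trans (hr x hx).2]
  have hδM : δ / (1 + M) ≤ 1 := (div_le_one hM).2 (by linarith [(hr x hx).1.trans (hr x hx).2])
  have hsum := sum_range_one_div_comp_add_le hf hf' hfpos hf'pos hδ (fun y hy => (hr y hy).1) hx
  have hnonneg (k : ℕ) : 0 ≤ 1 / f (x + k) :=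
    (one_div_pos.2 (hfpos_x _ (le_add_of_nonneg_right k.cast_nonneg))).le
  have hs1 : Summable fun k : ℕ => 1 / f (x + k) := summable_of_sum_range_le hnonneg hsum
  have hS1 : ∑' k : ℕ, 1 / f (x + k) ≤ 1 / f x + 1 / (δ * f' x) :=
    Real.tsum_le_of_sum_range_le hnonneg hsum
  have hS1pos : 0 < ∑' k : ℕ, 1 / f (x + k) :=
    hs1.tsum_pos hnonneg 0 (by simpa using hP)
  have hs2 := summable_one_div_sq_comp_add hfpos_x hmono hs1
  have hS2M := div_le_tsum_one_div_sq_comp_add hf hf' hfpos hf'pos hf'top hM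
    (fun y hy => (hr y hy).2) hx hs2
  have hS2P : 1 / f x ^ 2 ≤ ∑' k : ℕ, 1 / f (x + k) ^ 2 := by
    simpa using hs2.le_tsum 0 (fun k _ => by positivity)
  rw [le_div_iff₀ hS1pos]
  calc δ / (2 * (1 + M)) * ∑' k : ℕ, 1 / f (x + k)
      ≤ δ / (2 * (1 + M)) * (1 / f x + 1 / (δ * f' x)) := by gcongr
    _ = δ / (1 + M) * (f x * (1 / f x ^ 2)) / 2
          + f x * (1 / ((1 + M) * (f x * f' x))) / 2 := by
        field_simp
    _ ≤ f x * (1 / f x ^ 2) / 2 + f x * (1 / ((1 + M) * (f x * f' x))) / 2 := by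
        gcongr ?_ / 2 + _
        exact mul_le_of_le_one_left (by positivity) hδM
    _ ≤ f x * ∑' k : ℕ, 1 / f (x + k) ^ 2 := by
        linarith [mul_le_mul_of_nonneg_left hS2P hP.le, mul_le_mul_of_nonneg_left hS2M hP.le]

end

theorem liminf_ratio_tsum_inv_sq_pos_of_smooth_general
    (Ψ : ℝ → ℝ) (hpos : ∀ x > (0 : ℝ), 0 < Ψ x)
    (hsmooth : ContDiffOn ℝ 2 Ψ (Set.Ioi 0))
    (hderiv : Tendsto (deriv Ψ) atTop atTop)
    (hsecond : ∃ C : ℝ, 0 < C ∧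
      Tendsto (fun x : ℝ => deriv (deriv Ψ) x * Ψ x / (deriv Ψ x) ^ 2) atTop (nhds C)) :
    0 < Filter.liminf (fun n : ℕ =>
        Ψ n * (∑' k : ℕ, 1 / (Ψ ((n + k : ℕ) : ℝ)) ^ 2)
          / (∑' k : ℕ, 1 / Ψ ((n + k : ℕ) : ℝ))) atTop := by
  obtain ⟨C, hC, hlim⟩ := hsecond
  obtain ⟨a, ha⟩ := eventually_atTop.1 <| (eventually_gt_atTop 0).and <|
    (hderiv.eventually_gt_atTop 0).and <|
      hlim.eventually (Icc_mem_nhds (half_lt_self hC) (lt_two_mul_self hC))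
  have hΨ (x : ℝ) (hx : x ≥ a) := hsmooth.hasDerivAt_and_hasDerivAt_deriv isOpen_Ioi (ha x hx).1
  have hΨpos (x : ℝ) (hx : x ≥ a) : 0 < Ψ x := hpos x (ha x hx).1
  have hΨmono := monotoneOn_Ici_of_hasDerivAt_pos (fun x hx => (hΨ x hx).1)
    (fun x hx => (ha x hx).2.1)
  set u : ℕ → ℝ := fun n => Ψ n * (∑' k : ℕ, 1 / (Ψ ((n + k : ℕ) : ℝ)) ^ 2)
    / (∑' k : ℕ, 1 / Ψ ((n + k : ℕ) : ℝ))
  have hbounds : ∀ᶠ n : ℕ in atTop, C / 2 / (2 * (1 + 2 * C)) ≤ u n ∧ u n ≤ 1 := by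
    filter_upwards [tendsto_natCast_atTop_atTop.eventually_ge_atTop a] with n hn
    simp only [u, Nat.cast_add]
    exact ⟨div_two_mul_le_mul_tsum_one_div_sq_div_tsum_one_div (fun x hx => (hΨ x hx).1)
      (fun x hx => (hΨ x hx).2) hΨpos (fun x hx => (ha x hx).2.1) hderiv (half_pos hC)
      (fun x hx => (ha x hx).2.2) hn,
      mul_tsum_one_div_sq_div_tsum_one_div_le_one (fun y hy => hΨpos y (hn.trans hy))
        (hΨmono.mono (Ici_subset_Ici.2 hn))⟩
  exact lt_of_lt_of_le (by positivity) <| le_liminf_of_le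
    (isBoundedUnder_of_eventually_le (hbounds.mono fun _ h => h.2)).isCoboundedUnder_ge
    (hbounds.mono fun _ h => h.1)

/-- If `Ψ : (0,∞) → (0,∞)` is increasing and twice continuously differentiable with
`∫_1^∞ du/Ψ(u) < ∞`, `liminf_{x→∞} Ψ'(x) = ∞`, `lim_{x→∞} Ψ(x)/Ψ(x−1)` exists in
`[1,∞)`, and `lim_{x→∞} Ψ''(x)Ψ(x)/Ψ'(x)²` exists and is positive, then
`liminf_{n→∞} Ψ(n) · (Σ_{k=n}^∞ 1/Ψ(k)²) / (Σ_{k=n}^∞ 1/Ψ(k)) > 0`. -/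
theorem liminf_ratio_tsum_inv_sq_pos_of_smooth
    (Ψ : ℝ → ℝ) (hpos : ∀ x > (0 : ℝ), 0 < Ψ x)
    (hmono : StrictMonoOn Ψ (Set.Ioi 0))
    (hsmooth : ContDiffOn ℝ 2 Ψ (Set.Ioi 0))
    (hint : MeasureTheory.IntegrableOn (fun u => 1 / Ψ u) (Set.Ioi 1))
    (hderiv : Tendsto (deriv Ψ) atTop atTop)
    (hratio : ∃ L : ℝ, 1 ≤ L ∧ Tendsto (fun x : ℝ => Ψ x / Ψ (x - 1)) atTop (nhds L))
    (hsecond : ∃ C : ℝ, 0 < C ∧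
      Tendsto (fun x : ℝ => deriv (deriv Ψ) x * Ψ x / (deriv Ψ x) ^ 2) atTop (nhds C)) :
    0 < Filter.liminf (fun n : ℕ =>
        Ψ n * (∑' k : ℕ, 1 / (Ψ ((n + k : ℕ) : ℝ)) ^ 2)
          / (∑' k : ℕ, 1 / Ψ ((n + k : ℕ) : ℝ))) atTop :=
  liminf_ratio_tsum_inv_sq_pos_of_smooth_general Ψ hpos hsmooth hderiv hsecond
end

section
/- Let Ψ : (0, ∞) → (0, ∞) be an increasing function such that lim_{x→∞} Ψ(x)/Ψ(x−1) = ∞. Then limsup_{n→∞} Ψ(n) · Σ_{k=n}^∞ 1/Ψ(k) ≤ 2. -/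
open Filter
open scoped Topology

/-!
Put `a n = Ψ n`. Eventually `a (m + 1) / a m ≥ c` with `c = 2`, so by telescoping
`0 < a n / a (n + k) ≤ c⁻¹ ^ k`; hence `a n * ∑' k, 1 / a (n + k) = ∑' k, a n / a (n + k)` is
dominated by the geometric series `∑' k, c⁻¹ ^ k = c / (c - 1)`. The positivity of
`a n / a (n + k)` comes from the ratio bound alone: ratios `≥ c > 0` force consecutive terms to be
nonzero and of the same sign.
-/

section RatioTest

variable {a : ℕ → ℝ} {c : ℝ} {n : ℕ}

theorem div_add_mem_Ioc_inv_pow_of_le_ratio (hc : 0 < c) (h : ∀ m ≥ n, c ≤ a (m + 1) / a m)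
    (k : ℕ) :
    a n / a (n + k) ∈ Set.Ioc 0 (c⁻¹ ^ k) := by
  induction k with
  | zero =>
    have : a n ≠ 0 := fun h0 => by simpa [h0] using hc.trans_le (h n le_rfl)
    simp [div_self this]
  | succ k ih =>
    have hratio := hc.trans_le (h (n + k) (Nat.le_add_right n k))
    have hstep : a n / a (n + (k + 1)) = a n / a (n + k) * (a (n + k + 1) / a (n + k))⁻¹ := by
      have : a (n + k) ≠ 0 := fun h0 => by simp [h0] at hratio
      rw [← add_assoc]; field_simp
    rw [hstep, pow_succ]
    exact ⟨mul_pos ih.1 (inv_pos.2 hratio),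
      mul_le_mul ih.2 (inv_anti₀ hc (h _ (Nat.le_add_right n k))) (inv_pos.2 hratio).le
        (pow_nonneg (inv_pos.2 hc).le k)⟩

theorem mul_tsum_inv_le_of_le_ratio (hc : 1 < c) (h : ∀ m ≥ n, c ≤ a (m + 1) / a m) :
    0 ≤ a n * ∑' k : ℕ, 1 / a (n + k) ∧ a n * ∑' k : ℕ, 1 / a (n + k) ≤ c / (c - 1) := by
  have hbound := div_add_mem_Ioc_inv_pow_of_le_ratio (zero_lt_one.trans hc) h
  have hgeom : HasSum (fun k : ℕ => c⁻¹ ^ k) (c / (c - 1)) := by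
    have hc' : c⁻¹ < 1 := inv_lt_one_of_one_lt₀ hc
    convert hasSum_geometric_of_lt_one (inv_nonneg.2 (zero_le_one.trans hc.le)) hc' using 1
    field_simp
  have hsum : Summable fun k : ℕ => a n / a (n + k) :=
    .of_nonneg_of_le (fun k => (hbound k).1.le) (fun k => (hbound k).2) hgeom.summable
  have hrewrite : a n * ∑' k : ℕ, 1 / a (n + k) = ∑' k : ℕ, a n / a (n + k) := by
    rw [← tsum_mul_left]; simp only [mul_one_div]
  rw [hrewrite]
  exact ⟨tsum_nonneg fun k => (hbound k).1.le,
    hgeom.tsum_eq ▸ hsum.tsum_le_tsum (fun k => (hbound k).2) hgeom.summable⟩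

theorem limsup_mul_tsum_inv_le_of_le_ratio (hc : 1 < c)
    (h : ∀ᶠ m in atTop, c ≤ a (m + 1) / a m) :
    limsup (fun n : ℕ => a n * ∑' k : ℕ, 1 / a (n + k)) atTop ≤ c / (c - 1) := by
  obtain ⟨N, hN⟩ := eventually_atTop.1 h
  have hev : ∀ᶠ n in atTop, 0 ≤ a n * ∑' k : ℕ, 1 / a (n + k) ∧
      a n * ∑' k : ℕ, 1 / a (n + k) ≤ c / (c - 1) :=
    eventually_atTop.2 ⟨N, fun n hn =>
      mul_tsum_inv_le_of_le_ratio hc fun m hm => hN m (hn.trans hm)⟩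
  exact limsup_le_of_le
    (isBoundedUnder_of_eventually_ge (hev.mono fun _ => And.left)).isCoboundedUnder_le
    (hev.mono fun _ => And.right)

end RatioTest

theorem tendsto_natCast_succ_ratio {Ψ : ℝ → ℝ}
    (hsuper : Tendsto (fun x : ℝ => Ψ x / Ψ (x - 1)) atTop atTop) :
    Tendsto (fun n : ℕ => Ψ ((n + 1 : ℕ) : ℝ) / Ψ n) atTop atTop := by
  refine (hsuper.comp (tendsto_natCast_atTop_atTop.comp (tendsto_add_atTop_nat 1))).congr
    fun n => ?_
  simp

theorem limsup_mul_tsum_inv_le_two_of_superexp_general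
    (Ψ : ℝ → ℝ)
    (hsuper : Tendsto (fun x : ℝ => Ψ x / Ψ (x - 1)) atTop atTop) :
    Filter.limsup (fun n : ℕ =>
        Ψ n * ∑' k : ℕ, 1 / Ψ ((n + k : ℕ) : ℝ)) atTop ≤ 2 := by
  calc _ ≤ (2 : ℝ) / (2 - 1) := limsup_mul_tsum_inv_le_of_le_ratio (a := fun n : ℕ => Ψ n)
        one_lt_two ((tendsto_natCast_succ_ratio hsuper).eventually_ge_atTop 2)
    _ = 2 := by norm_num

/-- If `Ψ : (0,∞) → (0,∞)` is increasing with `Ψ(x)/Ψ(x−1) → ∞` as `x → ∞`, then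
`limsup_{n→∞} Ψ(n) · Σ_{k=n}^∞ 1/Ψ(k) ≤ 2`. -/
theorem limsup_mul_tsum_inv_le_two_of_superexp
    (Ψ : ℝ → ℝ) (hpos : ∀ x > (0 : ℝ), 0 < Ψ x)
    (hmono : StrictMonoOn Ψ (Set.Ioi 0))
    (hsuper : Tendsto (fun x : ℝ => Ψ x / Ψ (x - 1)) atTop atTop) :
    Filter.limsup (fun n : ℕ =>
        Ψ n * ∑' k : ℕ, 1 / Ψ ((n + k : ℕ) : ℝ)) atTop ≤ 2 :=
  limsup_mul_tsum_inv_le_two_of_superexp_general Ψ hsuper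
end

section
/- Let Ψ : (0, ∞) → (0, ∞) be an increasing function such that lim_{x→∞} Ψ(x)/Ψ(x−1) = ∞. Then limsup_{n→∞} Ψ(n) · Σ_{k=n+1}^∞ 1/Ψ(k) ≤ 1. -/
open Filter
open scoped Topology

/-! Once `Ψ(m + 1) ≥ M Ψ(m)` for all `m ≥ n`, the tail `Σ_{k>n} Ψ(n)/Ψ(k)` is dominated by the
geometric series `Σ_{j≥1} M⁻ʲ = 1/(M - 1)`. Since `M` can be taken arbitrarily large, the
products `Ψ(n) Σ_{k>n} 1/Ψ(k)` tend to `0`, so their limsup is even `0`. -/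

theorem pow_mul_le_of_mul_le_succ {b : ℕ → ℝ} {M : ℝ} (hM : 0 ≤ M)
    (hstep : ∀ k, M * b k ≤ b (k + 1)) (k : ℕ) : M ^ k * b 0 ≤ b k := by
  induction k with
  | zero => simp
  | succ k ih =>
    calc M ^ (k + 1) * b 0 = M * (M ^ k * b 0) := by ring
      _ ≤ M * b k := mul_le_mul_of_nonneg_left ih hM
      _ ≤ b (k + 1) := hstep k

theorem mul_tsum_inv_succ_le_of_mul_le_succ {b : ℕ → ℝ} {M : ℝ} (hM : 1 < M) (hb : 0 < b 0)
    (hstep : ∀ k, M * b k ≤ b (k + 1)) :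
    b 0 * ∑' k, 1 / b (k + 1) ≤ 1 / (M - 1) := by
  have hgrowth := pow_mul_le_of_mul_le_succ (by linarith) hstep
  have hbpos : ∀ k, 0 < b k := fun k => (by positivity : 0 < M ^ k * b 0).trans_le (hgrowth k)
  have hterm : ∀ k, b 0 * (1 / b (k + 1)) ≤ M⁻¹ ^ (k + 1) := fun k => by
    rw [mul_one_div, div_le_iff₀ (hbpos _), inv_pow, le_inv_mul_iff₀ (by positivity)]
    exact hgrowth (k + 1)
  have hr0 : 0 ≤ M⁻¹ := by positivity
  have hr1 : M⁻¹ < 1 := inv_lt_one_of_one_lt₀ hM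
  have hgeom : Summable fun k : ℕ => M⁻¹ ^ (k + 1) :=
    (summable_nat_add_iff 1).2 (summable_geometric_of_lt_one hr0 hr1)
  calc b 0 * ∑' k, 1 / b (k + 1) = ∑' k, b 0 * (1 / b (k + 1)) := tsum_mul_left.symm
    _ ≤ ∑' k : ℕ, M⁻¹ ^ (k + 1) :=
      (hgeom.of_nonneg_of_le (fun k => by have := hbpos (k + 1); positivity) hterm).tsum_le_tsum
        hterm hgeom
    _ = 1 / (M - 1) := by
      simp_rw [pow_succ, tsum_mul_right, tsum_geometric_of_lt_one hr0 hr1]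
      field_simp [(by linarith : M - 1 ≠ 0)]

theorem tendsto_mul_tsum_inv_succ_of_tendsto_div_atTop {a : ℕ → ℝ}
    (hpos : ∀ᶠ n in atTop, 0 < a n) (hratio : Tendsto (fun n => a (n + 1) / a n) atTop atTop) :
    Tendsto (fun n => a n * ∑' k, 1 / a (n + 1 + k)) atTop (𝓝 0) := by
  have hbounds : ∀ M > 1, ∀ᶠ n in atTop,
      0 ≤ a n * ∑' k, 1 / a (n + 1 + k) ∧ a n * ∑' k, 1 / a (n + 1 + k) ≤ 1 / (M - 1) := by
    intro M hM
    obtain ⟨N, hN⟩ := eventually_atTop.1 (hpos.and (hratio.eventually_ge_atTop M))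
    filter_upwards [eventually_ge_atTop N] with n hn
    have hshift : ∀ k, n + 1 + k = n + (k + 1) := by omega
    simp only [hshift]
    refine ⟨mul_nonneg (hN n hn).1.le (tsum_nonneg fun k => ?_), ?_⟩
    · exact (one_div_pos.2 (hN _ (by omega)).1).le
    · refine mul_tsum_inv_succ_le_of_mul_le_succ (b := fun k => a (n + k)) hM (hN n hn).1
        fun k => ?_
      obtain ⟨hak, hMk⟩ := hN (n + k) (by omega)
      exact (le_div_iff₀ hak).1 hMk
  rw [tendsto_order]
  refine ⟨fun c hc => ?_, fun ε hε => ?_⟩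
  · exact (hbounds 2 one_lt_two).mono fun n hn => hc.trans_le hn.1
  · refine (hbounds (1 + 2 / ε) (lt_add_of_pos_right 1 (by positivity))).mono fun n hn => hn.2.trans_lt ?_
    rw [add_sub_cancel_left, one_div_div]
    linarith

theorem limsup_mul_tsum_inv_succ_le_one_of_superexp_general
    (Ψ : ℝ → ℝ) (hpos : ∀ x > (0 : ℝ), 0 < Ψ x)
    (hsuper : Tendsto (fun x : ℝ => Ψ x / Ψ (x - 1)) atTop atTop) :
    Filter.limsup (fun n : ℕ =>
        Ψ n * ∑' k : ℕ, 1 / Ψ ((n + 1 + k : ℕ) : ℝ)) atTop ≤ 1 := by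
  have hpos' : ∀ᶠ n : ℕ in atTop, 0 < Ψ n :=
    (eventually_gt_atTop 0).mono fun n hn => hpos _ (by exact_mod_cast hn)
  have hratio : Tendsto (fun n : ℕ => Ψ ((n + 1 : ℕ) : ℝ) / Ψ n) atTop atTop :=
    (hsuper.comp (tendsto_natCast_atTop_atTop.comp (tendsto_add_atTop_nat 1))).congr
      fun n => by simp
  rw [(tendsto_mul_tsum_inv_succ_of_tendsto_div_atTop (a := fun n : ℕ => Ψ n) hpos'
    hratio).limsup_eq]
  exact zero_le_one

/-- If `Ψ : (0,∞) → (0,∞)` is increasing with `Ψ(x)/Ψ(x−1) → ∞` as `x → ∞`, then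
`limsup_{n→∞} Ψ(n) · Σ_{k=n+1}^∞ 1/Ψ(k) ≤ 1`. -/
theorem limsup_mul_tsum_inv_succ_le_one_of_superexp
    (Ψ : ℝ → ℝ) (hpos : ∀ x > (0 : ℝ), 0 < Ψ x)
    (hmono : StrictMonoOn Ψ (Set.Ioi 0))
    (hsuper : Tendsto (fun x : ℝ => Ψ x / Ψ (x - 1)) atTop atTop) :
    Filter.limsup (fun n : ℕ =>
        Ψ n * ∑' k : ℕ, 1 / Ψ ((n + 1 + k : ℕ) : ℝ)) atTop ≤ 1 :=
  limsup_mul_tsum_inv_succ_le_one_of_superexp_general Ψ hpos hsuper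
end

section
/- Let Ψ : (0, ∞) → (0, ∞) be an increasing function such that lim_{x→∞} Ψ(x)/Ψ(x−1) = ∞. Then lim_{x→∞} (∫_x^∞ du/Ψ(u)) / (∫_x^{x+1} du/Ψ(u)) = 1. -/
/-!
With `f = 1/Ψ` we have `f (u + 1) / f u → 0`. Once `f (u + 1) ≤ r * f u` for all `u ≥ x`,
translating by one gives `∫_{x+1}^∞ f ≤ r ∫_x^∞ f`, hence
`(1 - r) ∫_x^∞ f ≤ ∫_x^{x+1} f ≤ ∫_x^∞ f`, and `r` can be taken arbitrarily small.
The tail is integrable by the integral test, since `f (x + n)` decays geometrically.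
-/

open Filter MeasureTheory Set
open scoped Topology

theorem integral_Ioi_comp_add_right {E : Type*} [NormedAddCommGroup E] [NormedSpace ℝ E]
    (f : ℝ → E) (a c : ℝ) : ∫ u in Ioi a, f (u + c) = ∫ u in Ioi (a + c), f u := by
  simpa [preimage_add_const_Ioi] using
    (measurePreserving_add_right volume c).setIntegral_preimage_emb
      (measurableEmbedding_addRight c) f (Ioi (a + c))

theorem integrableOn_Ioi_comp_add_right {E : Type*} [NormedAddCommGroup E] {f : ℝ → E}
    (a c : ℝ) : IntegrableOn (fun u => f (u + c)) (Ioi a) ↔ IntegrableOn f (Ioi (a + c)) := by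
  simpa [preimage_add_const_Ioi, Function.comp_def] using
    (measurePreserving_add_right volume c).integrableOn_comp_preimage
      (measurableEmbedding_addRight c) (f := f) (s := Ioi (a + c))

theorem AntitoneOn.integrableOn_Ioi_of_add_one_le {f : ℝ → ℝ} {a r : ℝ}
    (hanti : AntitoneOn f (Ici a)) (hnonneg : ∀ u ≥ a, 0 ≤ f u) (hr : r < 1)
    (hstep : ∀ u ≥ a, f (u + 1) ≤ r * f u) : IntegrableOn f (Ioi a) := by
  have hanti' : AntitoneOn (fun t => f (t + a)) (Ici 0) := fun s hs t ht hst =>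
    hanti (by simpa using hs) (by simpa using ht) (by linarith)
  have hsum : Summable fun n : ℕ => f (n + a) := by
    refine summable_of_ratio_norm_eventually_le hr (Eventually.of_forall fun n => ?_)
    have hn : a ≤ n + a := by linarith [n.cast_nonneg (α := ℝ)]
    rw [Real.norm_of_nonneg (hnonneg _ (by push_cast; linarith)),
      Real.norm_of_nonneg (hnonneg _ hn)]
    simpa [add_right_comm] using hstep _ hn
  have := hanti'.integrableOn_Ioi_zero_of_summable hsum fun t ht =>
    hnonneg _ (by linarith [mem_Ioi.1 ht])
  simpa using (integrableOn_Ioi_comp_add_right 0 a).1 this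

theorem integral_Ioi_add_one_le {f : ℝ → ℝ} {a r : ℝ} (hf : IntegrableOn f (Ioi a))
    (hstep : ∀ u > a, f (u + 1) ≤ r * f u) :
    ∫ u in Ioi (a + 1), f u ≤ r * ∫ u in Ioi a, f u := by
  rw [← integral_Ioi_comp_add_right, ← integral_const_mul]
  refine setIntegral_mono_on ?_ (hf.const_mul r) measurableSet_Ioi hstep
  exact (integrableOn_Ioi_comp_add_right a 1).2 (hf.mono_set (Ioi_subset_Ioi (by linarith)))

theorem one_sub_mul_integral_Ioi_le_integral_Ioc {f : ℝ → ℝ} {a r : ℝ}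
    (hf : IntegrableOn f (Ioi a)) (hstep : ∀ u > a, f (u + 1) ≤ r * f u) :
    (1 - r) * ∫ u in Ioi a, f u ≤ ∫ u in Ioc a (a + 1), f u := by
  have hsplit : ∫ u in Ioi a, f u = (∫ u in Ioc a (a + 1), f u) + ∫ u in Ioi (a + 1), f u := by
    rw [← Ioc_union_Ioi_eq_Ioi (by linarith : a ≤ a + 1)]
    exact setIntegral_union Ioc_disjoint_Ioi_same measurableSet_Ioi
      (hf.mono_set Ioc_subset_Ioi_self) (hf.mono_set (Ioi_subset_Ioi (by linarith)))
  have := integral_Ioi_add_one_le hf hstep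
  linarith

theorem integral_Ioc_add_one_pos {f : ℝ → ℝ} {a : ℝ} (hf : IntegrableOn f (Ioi a))
    (hpos : ∀ u > a, 0 < f u) : 0 < ∫ u in Ioc a (a + 1), f u := by
  rw [← intervalIntegral.integral_of_le (by linarith)]
  refine intervalIntegral.intervalIntegral_pos_of_pos_on ?_ (fun u hu => hpos u hu.1) (by linarith)
  exact (intervalIntegrable_iff_integrableOn_Ioc_of_le (by linarith)).2
    (hf.mono_set Ioc_subset_Ioi_self)

theorem integral_Ioc_le_integral_Ioi {f : ℝ → ℝ} {a : ℝ} (hf : IntegrableOn f (Ioi a))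
    (hnonneg : ∀ u > a, 0 ≤ f u) : ∫ u in Ioc a (a + 1), f u ≤ ∫ u in Ioi a, f u :=
  setIntegral_mono_set hf ((ae_restrict_mem measurableSet_Ioi).mono hnonneg)
    (Eventually.of_forall Ioc_subset_Ioi_self)

theorem tendsto_integral_Ioi_div_integral_Ioc {f : ℝ → ℝ} {a : ℝ} (hanti : AntitoneOn f (Ioi a))
    (hpos : ∀ u > a, 0 < f u) (hdecay : Tendsto (fun u => f (u + 1) / f u) atTop (𝓝 0)) :
    Tendsto (fun x => (∫ u in Ioi x, f u) / ∫ u in Ioc x (x + 1), f u) atTop (𝓝 1) := by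
  have hstep : ∀ r > 0, ∀ᶠ x in atTop, a < x ∧ ∀ u ≥ x, f (u + 1) ≤ r * f u := by
    intro r hr
    have hu : ∀ᶠ u in atTop, f (u + 1) ≤ r * f u := by
      filter_upwards [hdecay.eventually (ge_mem_nhds hr), eventually_gt_atTop a] with u hu hau
      rwa [div_le_iff₀ (hpos u hau)] at hu
    exact (eventually_gt_atTop a).and (eventually_forall_ge_atTop.2 hu)
  have hint : ∀ᶠ x in atTop, IntegrableOn f (Ioi x) := by
    filter_upwards [hstep (1 / 2) (by norm_num)] with x ⟨hax, hx⟩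
    exact (hanti.mono (Ici_subset_Ioi.2 hax)).integrableOn_Ioi_of_add_one_le
      (fun u hu => (hpos u (by linarith)).le) (by norm_num) hx
  refine tendsto_order.2 ⟨fun b hb => ?_, fun b hb => ?_⟩
  · filter_upwards [hint, eventually_gt_atTop a] with x hx hax
    have hA := integral_Ioc_add_one_pos hx fun u hu => hpos u (by linarith)
    have hAI := integral_Ioc_le_integral_Ioi hx fun u hu => (hpos u (by linarith)).le
    rw [lt_div_iff₀ hA]
    nlinarith
  · -- `r = (1 - b⁻¹) / 2` makes `b * (1 - r) = (b + 1) / 2 > 1`.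
    have hr : 0 < (1 - b⁻¹) / 2 := by
      have : b⁻¹ < 1 := inv_lt_one_of_one_lt₀ hb
      linarith
    filter_upwards [hint, hstep _ hr] with x hx ⟨hax, hxstep⟩
    have hA := integral_Ioc_add_one_pos hx fun u hu => hpos u (by linarith)
    have hAI := integral_Ioc_le_integral_Ioi hx fun u hu => (hpos u (by linarith)).le
    have hIA := one_sub_mul_integral_Ioi_le_integral_Ioc hx fun u hu => hxstep u hu.le
    rw [div_lt_iff₀ hA]
    have hb' : b * b⁻¹ = 1 := mul_inv_cancel₀ (by linarith)
    nlinarith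

/-- If `Ψ : (0,∞) → (0,∞)` is increasing with `Ψ(x)/Ψ(x−1) → ∞` as `x → ∞`, then
`(∫_x^∞ du/Ψ(u)) / (∫_x^{x+1} du/Ψ(u)) → 1` as `x → ∞`. -/
theorem tendsto_ratio_integral_inv_of_superexp
    (Ψ : ℝ → ℝ) (hpos : ∀ x > (0 : ℝ), 0 < Ψ x)
    (hmono : StrictMonoOn Ψ (Set.Ioi 0))
    (hsuper : Tendsto (fun x : ℝ => Ψ x / Ψ (x - 1)) atTop atTop) :
    Tendsto (fun x : ℝ =>
        (∫ u in Set.Ioi x, 1 / Ψ u) / ∫ u in Set.Ioc x (x + 1), 1 / Ψ u)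
      atTop (𝓝 1) := by
  have hanti : AntitoneOn (fun u => 1 / Ψ u) (Ioi 0) := fun u hu v hv huv =>
    one_div_le_one_div_of_le (hpos u hu) (hmono.monotoneOn hu hv huv)
  refine tendsto_integral_Ioi_div_integral_Ioc hanti (fun u hu => one_div_pos.2 (hpos u hu)) ?_
  have hsuper' : Tendsto (fun u => Ψ (u + 1) / Ψ u) atTop atTop := by
    simpa [Function.comp_def] using hsuper.comp (tendsto_atTop_add_const_right _ 1 tendsto_id)
  convert tendsto_inv_atTop_zero.comp hsuper' using 2 with u
  simp only [Function.comp_apply]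
  ring
end

section
/- Let Ψ : (0, ∞) → (0, ∞) be differentiable with Ψ'(x) > 0 for all x > 0, and let θ : (0, ∞) → (0, ∞) be a positive increasing function. Suppose there exists a ∈ (0, 1/2) such that Ψ(z + a·ln z)/Ψ(z + θ(z)) ≥ 1 + 1/(2z) for all sufficiently large z. Then for all sufficiently large n, Σ_{k ≥ n − ⌊ln n⌋/2 − 1} 1/Ψ(k + θ(k)) ≥ Σ_{k ≥ n} 1/Ψ(k), where both sums run over integers k. -/
/-!
Put `v k = 1 / Ψ k`, positive and decreasing, and `G j = j + ⌈a ln j⌉`. The hypothesis and the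
monotonicity of `Ψ` give `(1 + 1/(2j)) v (G j) ≤ 1 / Ψ (j + θ j)`, so it suffices to dominate
`∑_{k ≥ n} v k` by `∑_{j ≥ m} (1 + 1/(2j)) v (G j)`, where `m = ⌈n - ⌊ln n⌋/2 - 1⌉` satisfies
`G m < n` because `a < 1/2`. The block `(G j, G (j+1)]` consists of `G (j+1)` and
`⌈a ln (j+1)⌉ - ⌈a ln j⌉` further points, where `v ≤ v (G j)`. These surplus counts add up to at
most `1 + a ln (T/m) ≤ 1 + ∑_{m ≤ j < T} 1/(2j)`, so summation by parts against the decreasing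
weights `v (G j)` absorbs them into the terms `v (G j)/(2j)` and one extra term `v (G m)`.
-/

open Filter
open scoped ENNReal Classical

open Finset Real

theorem strictMonoOn_of_forall_hasDerivAt_pos {D : Set ℝ} (hD : Convex ℝ D)
    {f : ℝ → ℝ} (hf : ∀ x ∈ D, ∃ d : ℝ, 0 < d ∧ HasDerivAt f d x) : StrictMonoOn f D := by
  refine strictMonoOn_of_deriv_pos hD (fun x hx => ?_) fun x hx => ?_
  · obtain ⟨d, -, hd⟩ := hf x hx
    exact hd.continuousAt.continuousWithinAt
  · obtain ⟨d, hd0, hd⟩ := hf x (interior_subset hx)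
    rwa [hd.deriv]

theorem sum_Ioc_succ_le_add_mul {v : ℕ → ℝ} {a b : ℕ} (hv : AntitoneOn v (Set.Ici a))
    (hab : a ≤ b) : ∑ k ∈ Ioc a (b + 1), v k ≤ v (b + 1) + ((b : ℝ) - a) * v a := by
  rw [sum_Ioc_succ_top hab, add_comm]
  gcongr
  calc ∑ k ∈ Ioc a b, v k ≤ #(Ioc a b) • v a :=
        sum_le_card_nsmul _ _ _ fun k hk =>
          hv (Set.mem_Ici.2 le_rfl) (Set.mem_Ici.2 (mem_Ioc.1 hk).1.le) (mem_Ioc.1 hk).1.le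
    _ = ((b : ℝ) - a) * v a := by rw [Nat.card_Ioc, nsmul_eq_mul, Nat.cast_sub hab]

theorem sum_Ioc_le_sum_Ico_of_monotone {v : ℕ → ℝ} {H : ℕ → ℕ} {m J : ℕ} (hH : Monotone H)
    (hv : AntitoneOn v (Set.Ici (m + H m))) (hmJ : m ≤ J) :
    ∑ k ∈ Ioc (m + H m) (J + H J), v k ≤
      ∑ j ∈ Ico m J, (v (j + 1 + H (j + 1)) + ((H (j + 1) : ℝ) - H j) * v (j + H j)) := by
  induction J, hmJ using Nat.le_induction with
  | base => simp
  | succ J hmJ ih =>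
    have hGJ : m + H m ≤ J + H J := add_le_add hmJ (hH hmJ)
    rw [← sum_Ioc_consecutive _ hGJ (add_le_add J.le_succ (hH J.le_succ)), sum_Ico_succ_top hmJ]
    gcongr
    rw [show J + 1 + H (J + 1) = J + H (J + 1) + 1 by ring]
    refine (sum_Ioc_succ_le_add_mul (hv.mono (Set.Ici_subset_Ici.2 hGJ))
      (Nat.add_le_add_left (hH J.le_succ) J)).trans_eq ?_
    push_cast
    ring

theorem sum_mul_le_of_sum_le_add {e c w : ℕ → ℝ} {m J : ℕ} {C : ℝ}
    (hw : AntitoneOn w (Set.Ici m)) (hw0 : ∀ j, m ≤ j → 0 ≤ w j)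
    (hec : ∀ T, m ≤ T → ∑ j ∈ Ico m T, e j ≤ C + ∑ j ∈ Ico m T, c j) (hmJ : m ≤ J) :
    ∑ j ∈ Ico m J, e j * w j ≤ C * w m + ∑ j ∈ Ico m J, c j * w j := by
  -- the nonnegative slack `C + ∑ c - ∑ e` is carried along at the current weight `w T`
  suffices h : ∀ T, m ≤ T → ∑ j ∈ Ico m T, e j * w j
      + (C + ∑ j ∈ Ico m T, c j - ∑ j ∈ Ico m T, e j) * w T ≤ C * w m + ∑ j ∈ Ico m T, c j * w j by
    linarith [h J hmJ, mul_nonneg (sub_nonneg.2 (hec J hmJ)) (hw0 J hmJ)]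
  intro T hmT
  induction T, hmT using Nat.le_induction with
  | base => simp
  | succ T hmT ih =>
    simp only [sum_Ico_succ_top hmT]
    have hslack := mul_le_mul_of_nonneg_left (hw hmT (by grind) (Nat.le_succ T))
      (show 0 ≤ C + (∑ j ∈ Ico m T, c j + c T) - (∑ j ∈ Ico m T, e j + e T) by
        simpa [sum_Ico_succ_top hmT] using hec (T + 1) (by omega))
    linarith

theorem sum_Ioc_le_sum_Icc_one_add_mul {v : ℕ → ℝ} {H : ℕ → ℕ} {c : ℕ → ℝ} {m J : ℕ}
    (hH : Monotone H) (hv : AntitoneOn v (Set.Ici (m + H m)))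
    (hv0 : ∀ k, m + H m ≤ k → 0 ≤ v k) (hc : ∀ j, 0 ≤ c j)
    (hHc : ∀ T, m ≤ T → (H T : ℝ) - H m ≤ 1 + ∑ j ∈ Ico m T, c j) (hmJ : m ≤ J) :
    ∑ k ∈ Ioc (m + H m) (J + H J), v k ≤ ∑ j ∈ Icc m J, (1 + c j) * v (j + H j) := by
  set w : ℕ → ℝ := fun j => v (j + H j)
  have hG : ∀ {i j}, i ≤ j → i + H i ≤ j + H j := fun hij => add_le_add hij (hH hij)
  have hw0 : ∀ j, m ≤ j → 0 ≤ w j := fun j hj => hv0 _ (hG hj)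
  have hw : AntitoneOn w (Set.Ici m) := fun i hi j hj hij => hv (hG hi) (hG hj) (hG hij)
  have habel := sum_mul_le_of_sum_le_add (e := fun j => (H (j + 1) : ℝ) - H j) (c := c) hw hw0
    (fun T hT => by rw [sum_Ico_sub (fun j => (H j : ℝ)) hT]; exact hHc T hT) hmJ
  have hshift : ∑ j ∈ Ico m J, w (j + 1) = ∑ j ∈ Ioc m J, w j := by
    rw [sum_Ico_add', Ico_add_one_add_one_eq_Ioc]
  have hc_Icc : ∑ j ∈ Ico m J, c j * w j ≤ ∑ j ∈ Icc m J, c j * w j :=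
    sum_le_sum_of_subset_of_nonneg Ico_subset_Icc_self fun j hj _ =>
      mul_nonneg (hc j) (hw0 j (mem_Icc.1 hj).1)
  calc ∑ k ∈ Ioc (m + H m) (J + H J), v k
      ≤ ∑ j ∈ Ico m J, (w (j + 1) + ((H (j + 1) : ℝ) - H j) * w j) :=
        sum_Ioc_le_sum_Ico_of_monotone hH hv hmJ
    _ = ∑ j ∈ Ioc m J, w j + ∑ j ∈ Ico m J, ((H (j + 1) : ℝ) - H j) * w j := by
        rw [sum_add_distrib, hshift]
    _ ≤ ∑ j ∈ Ioc m J, w j + (w m + ∑ j ∈ Icc m J, c j * w j) := by linarith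
    _ = ∑ j ∈ Icc m J, (1 + c j) * w j := by
        simp only [add_mul, one_mul, sum_add_distrib, ← add_sum_Ioc_eq_sum_Icc hmJ]; ring

theorem sum_Ico_le_sum_Icc_one_add_mul {v : ℕ → ℝ} {H : ℕ → ℕ} {c : ℕ → ℝ} {m n : ℕ}
    (hH : Monotone H) (hv : AntitoneOn v (Set.Ici (m + H m)))
    (hv0 : ∀ k, m + H m ≤ k → 0 ≤ v k) (hc : ∀ j, 0 ≤ c j)
    (hHc : ∀ T, m ≤ T → (H T : ℝ) - H m ≤ 1 + ∑ j ∈ Ico m T, c j) (hmn : m + H m < n) (N : ℕ) :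
    ∑ k ∈ Ico n N, v k ≤ ∑ j ∈ Icc m (N + m), (1 + c j) * v (j + H j) := by
  refine le_trans (sum_le_sum_of_subset_of_nonneg (fun k hk => ?_) fun k hk _ => hv0 k ?_)
    (sum_Ioc_le_sum_Icc_one_add_mul hH hv hv0 hc hHc (m.le_add_left N))
  · simp only [mem_Ico, mem_Ioc] at hk ⊢
    omega
  · simp only [mem_Ioc] at hk
    omega

theorem log_sub_log_le_sum_Ico_one_div {m T : ℕ} (hm : 1 ≤ m) (hmT : m ≤ T) :
    log T - log m ≤ ∑ j ∈ Ico m T, 1 / (j : ℝ) := by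
  rw [← sum_Ico_sub (fun j => log j) hmT]
  refine sum_le_sum fun j hj => ?_
  have hj : (0 : ℝ) < j := by exact_mod_cast hm.trans (mem_Ico.1 hj).1
  rw [Nat.cast_succ, ← log_div (by positivity) hj.ne']
  calc log ((j + 1) / j) ≤ (j + 1) / j - 1 := log_le_sub_one_of_pos (by positivity)
    _ = 1 / j := by field_simp; ring

theorem ceil_mul_log_sub_ceil_le {a : ℝ} (ha0 : 0 ≤ a) (ha : a ≤ 1 / 2) {m T : ℕ} (hm : 1 ≤ m)
    (hmT : m ≤ T) :
    (⌈a * log T⌉₊ : ℝ) - ⌈a * log m⌉₊ ≤ 1 + ∑ j ∈ Ico m T, 1 / (2 * (j : ℝ)) := by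
  have hmR : (1 : ℝ) ≤ m := by exact_mod_cast hm
  have hlog : log m ≤ log T := log_le_log (by positivity) (by exact_mod_cast hmT)
  have hT := Nat.ceil_lt_add_one (mul_nonneg ha0 ((log_nonneg hmR).trans hlog))
  have hceil := Nat.le_ceil (a * log m)
  have hsum : ∑ j ∈ Ico m T, 1 / (2 * (j : ℝ)) = (∑ j ∈ Ico m T, 1 / (j : ℝ)) / 2 := by
    rw [sum_div]; exact sum_congr rfl fun j _ => by ring
  have := log_sub_log_le_sum_Ico_one_div hm hmT
  nlinarith [mul_le_mul_of_nonneg_right ha (sub_nonneg.2 hlog)]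

theorem tsum_ite_le_tsum_ite_of_sum_Ico_le {f g : ℕ → ℝ} {n m : ℕ} (hf : ∀ k, n ≤ k → 0 ≤ f k)
    (hg : ∀ k, m ≤ k → 0 ≤ g k) (h : ∀ N, ∃ J, ∑ k ∈ Ico n N, f k ≤ ∑ k ∈ Icc m J, g k) :
    ∑' k, (if n ≤ k then ENNReal.ofReal (f k) else 0) ≤
      ∑' k, if m ≤ k then ENNReal.ofReal (g k) else 0 := by
  refine ENNReal.tsum_le_of_sum_range_le fun N => ?_
  obtain ⟨J, hJ⟩ := h N
  have hrange : {k ∈ range N | n ≤ k} = Ico n N := by ext; simp; omega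
  calc ∑ k ∈ range N, (if n ≤ k then ENNReal.ofReal (f k) else 0)
      = ENNReal.ofReal (∑ k ∈ Ico n N, f k) := by
        rw [← sum_filter, hrange, ENNReal.ofReal_sum_of_nonneg fun k hk => hf k (mem_Ico.1 hk).1]
    _ ≤ ENNReal.ofReal (∑ k ∈ Icc m J, g k) := ENNReal.ofReal_le_ofReal hJ
    _ = ∑ k ∈ Icc m J, (if m ≤ k then ENNReal.ofReal (g k) else 0) := by
        rw [ENNReal.ofReal_sum_of_nonneg fun k hk => hg k (mem_Icc.1 hk).1]
        exact sum_congr rfl fun k hk => (if_pos (mem_Icc.1 hk).1).symm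
    _ ≤ _ := ENNReal.sum_le_tsum _

theorem eventually_exists_index_add_ceil_log_lt {a : ℝ} (ha0 : 0 ≤ a) (ha : a < 1 / 2) (B : ℝ) :
    ∀ᶠ n : ℕ in atTop, ∃ m : ℕ, B ≤ m ∧ 1 ≤ m ∧ m + ⌈a * log m⌉₊ < n ∧
      ∀ k : ℕ, m ≤ k ↔ (n : ℝ) - (⌊log n⌋ : ℝ) / 2 - 1 ≤ k := by
  have hlog : ∀ᶠ n : ℕ in atTop, 3 / (1 - 2 * a) ≤ log n :=
    (tendsto_log_atTop.comp tendsto_natCast_atTop_atTop).eventually_ge_atTop _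
  have hlin : ∀ᶠ n : ℕ in atTop, max B 1 + 1 ≤ (n : ℝ) / 2 :=
    (tendsto_natCast_atTop_atTop.atTop_div_const two_pos).eventually_ge_atTop _
  filter_upwards [hlog, hlin] with n hlog hlin
  set x : ℝ := n - (⌊log n⌋ : ℝ) / 2 - 1 with hx_def
  have h2a : 0 < 1 - 2 * a := by linarith
  have hlog3 : 3 ≤ (1 - 2 * a) * log n := by rwa [div_le_iff₀' h2a] at hlog
  have hlog0 : 0 ≤ log n := le_trans (by positivity) hlog
  have hfloor := Int.floor_le (log n)
  have hfloor' := Int.sub_one_lt_floor (log n)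
  have hx : max B 1 ≤ x := by linarith [log_le_self (Nat.cast_nonneg n)]
  have hm1 : (1 : ℝ) ≤ ⌈x⌉₊ := (le_max_right _ _).trans (hx.trans (Nat.le_ceil x))
  have hmx := Nat.ceil_lt_add_one ((zero_le_one.trans (le_max_right _ _)).trans hx)
  have hmn : (⌈x⌉₊ : ℝ) ≤ n := by
    linarith [Int.cast_nonneg (R := ℝ) (Int.floor_nonneg.2 hlog0)]
  have hceil := Nat.ceil_lt_add_one (mul_nonneg ha0 (log_nonneg hm1))
  have hlogm := mul_le_mul_of_nonneg_left (log_le_log (by positivity) hmn) ha0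
  refine ⟨⌈x⌉₊, (le_max_left _ _).trans (hx.trans (Nat.le_ceil x)), by exact_mod_cast hm1, ?_,
    fun k => Nat.ceil_le⟩
  suffices (⌈x⌉₊ : ℝ) + ⌈a * log ⌈x⌉₊⌉₊ < n by exact_mod_cast this
  linarith

theorem monotone_ceil_mul_log_natCast {a : ℝ} (ha : 0 ≤ a) :
    Monotone fun j : ℕ => ⌈a * log j⌉₊ := by
  refine fun i j hij => Nat.ceil_mono (mul_le_mul_of_nonneg_left ?_ ha)
  rcases i.eq_zero_or_pos with rfl | hi
  · simpa using log_natCast_nonneg j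
  · exact log_le_log (Nat.cast_pos.2 hi) (Nat.cast_le.2 hij)

theorem antitoneOn_one_div_natCast {Ψ : ℝ → ℝ} (hΨpos : ∀ x > (0 : ℝ), 0 < Ψ x)
    (hΨ : MonotoneOn Ψ (Set.Ioi 0)) : AntitoneOn (fun k : ℕ => 1 / Ψ k) (Set.Ici 1) :=
  fun _ hi _ _ hij => one_div_le_one_div_of_le (hΨpos _ (Nat.cast_pos.2 hi)) <|
    hΨ (Set.mem_Ioi.2 (Nat.cast_pos.2 hi)) (Set.mem_Ioi.2 (Nat.cast_pos.2 (hi.trans hij)))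
      (Nat.cast_le.2 hij)

theorem one_add_mul_one_div_le_of_ratio_ge {Ψ θ : ℝ → ℝ} (hΨpos : ∀ x > (0 : ℝ), 0 < Ψ x)
    (hΨ : MonotoneOn Ψ (Set.Ioi 0)) (hθpos : ∀ x > (0 : ℝ), 0 < θ x) {a z y : ℝ} (ha : 0 ≤ a)
    (hz : 1 ≤ z) (hy : z + a * log z ≤ y)
    (hratio : 1 + 1 / (2 * z) ≤ Ψ (z + a * log z) / Ψ (z + θ z)) :
    (1 + 1 / (2 * z)) * (1 / Ψ y) ≤ 1 / Ψ (z + θ z) := by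
  have hshift : 0 < z + a * log z := by have := log_nonneg hz; positivity
  have hθ : 0 < Ψ (z + θ z) := hΨpos _ (by linarith [hθpos z (by linarith)])
  rw [mul_one_div, div_le_div_iff₀ (hΨpos _ (hshift.trans_le hy)) hθ, one_mul]
  calc (1 + 1 / (2 * z)) * Ψ (z + θ z) ≤ Ψ (z + a * log z) := (le_div_iff₀ hθ).1 hratio
    _ ≤ Ψ y := hΨ hshift (hshift.trans_le hy) hy

theorem tsum_inv_shift_ge_of_ratio_ge_general
    (Ψ θ : ℝ → ℝ)
    (hΨpos : ∀ x > (0 : ℝ), 0 < Ψ x)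
    (hΨderiv : ∀ x > (0 : ℝ), ∃ d : ℝ, 0 < d ∧ HasDerivAt Ψ d x)
    (hθpos : ∀ x > (0 : ℝ), 0 < θ x)
    (hprot : ∃ a : ℝ, 0 < a ∧ a < 1 / 2 ∧
      ∀ᶠ z : ℝ in atTop, 1 + 1 / (2 * z) ≤ Ψ (z + a * Real.log z) / Ψ (z + θ z)) :
    ∀ᶠ n : ℕ in atTop,
      (∑' k : ℕ, if (n : ℝ) ≤ (k : ℝ) then ENNReal.ofReal (1 / Ψ k) else 0)
        ≤ ∑' k : ℕ, if (n : ℝ) - (⌊Real.log n⌋ : ℝ) / 2 - 1 ≤ (k : ℝ) then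
            ENNReal.ofReal (1 / Ψ ((k : ℝ) + θ k)) else 0 := by
  obtain ⟨a, ha0, ha, hratio⟩ := hprot
  obtain ⟨Z, hZ⟩ := eventually_atTop.1 hratio
  have hΨ : MonotoneOn Ψ (Set.Ioi 0) :=
    (strictMonoOn_of_forall_hasDerivAt_pos (convex_Ioi 0) hΨderiv).monotoneOn
  have hv := antitoneOn_one_div_natCast hΨpos hΨ
  have hv0 : ∀ k : ℕ, 1 ≤ k → 0 ≤ 1 / Ψ k := fun k hk =>
    (one_div_pos.2 (hΨpos _ (Nat.cast_pos.2 hk))).le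
  filter_upwards [eventually_exists_index_add_ceil_log_lt ha0.le ha Z]
    with n ⟨m, hZm, hm1, hroom, hm⟩
  simp only [Nat.cast_le, ← hm]
  refine tsum_ite_le_tsum_ite_of_sum_Ico_le (f := fun k => 1 / Ψ k)
    (g := fun k => 1 / Ψ (k + θ k)) ?_ ?_ fun N => ⟨N + m, ?_⟩
  · exact fun k hk => hv0 k (by omega)
  · intro k hk
    have hk : (0 : ℝ) < k := Nat.cast_pos.2 (by omega)
    exact (one_div_pos.2 (hΨpos _ (by linarith [hθpos k hk]))).le
  calc ∑ k ∈ Ico n N, 1 / Ψ k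
      ≤ ∑ j ∈ Icc m (N + m), (1 + 1 / (2 * (j : ℝ))) * (1 / Ψ ↑(j + ⌈a * log j⌉₊)) :=
        sum_Ico_le_sum_Icc_one_add_mul (H := fun j => ⌈a * log j⌉₊)
          (monotone_ceil_mul_log_natCast ha0.le) (hv.mono (Set.Ici_subset_Ici.2 (by omega)))
          (fun k hk => hv0 k (by omega)) (fun j => by positivity)
          (fun T hT => ceil_mul_log_sub_ceil_le ha0.le ha.le hm1 hT) hroom N
    _ ≤ ∑ j ∈ Icc m (N + m), 1 / Ψ (j + θ j) := sum_le_sum fun j hj => by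
        have hmj := (mem_Icc.1 hj).1
        refine one_add_mul_one_div_le_of_ratio_ge hΨpos hΨ hθpos ha0.le
          (by exact_mod_cast hm1.trans hmj) ?_ (hZ j (hZm.trans (Nat.cast_le.2 hmj)))
        push_cast
        linarith [Nat.le_ceil (a * log j)]

/-- Let `Ψ : (0,∞) → (0,∞)` be differentiable with positive derivative, and let
`θ : (0,∞) → (0,∞)` be positive and increasing.  If there is `a ∈ (0, 1/2)` with
`Ψ(z + a·ln z)/Ψ(z + θ(z)) ≥ 1 + 1/(2z)` for all large `z`, then for all large `n`,
`Σ_{k ≥ n − ⌊ln n⌋/2 − 1} 1/Ψ(k + θ(k)) ≥ Σ_{k ≥ n} 1/Ψ(k)`, the sums running over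
integers `k` and being understood in the extended reals. -/
theorem tsum_inv_shift_ge_of_ratio_ge
    (Ψ θ : ℝ → ℝ)
    (hΨpos : ∀ x > (0 : ℝ), 0 < Ψ x)
    (hΨderiv : ∀ x > (0 : ℝ), ∃ d : ℝ, 0 < d ∧ HasDerivAt Ψ d x)
    (hθpos : ∀ x > (0 : ℝ), 0 < θ x)
    (hθmono : StrictMonoOn θ (Set.Ioi 0))
    (hprot : ∃ a : ℝ, 0 < a ∧ a < 1 / 2 ∧
      ∀ᶠ z : ℝ in atTop, 1 + 1 / (2 * z) ≤ Ψ (z + a * Real.log z) / Ψ (z + θ z)) :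
    ∀ᶠ n : ℕ in atTop,
      (∑' k : ℕ, if (n : ℝ) ≤ (k : ℝ) then ENNReal.ofReal (1 / Ψ k) else 0)
        ≤ ∑' k : ℕ, if (n : ℝ) - (⌊Real.log n⌋ : ℝ) / 2 - 1 ≤ (k : ℝ) then
            ENNReal.ofReal (1 / Ψ ((k : ℝ) + θ k)) else 0 :=
  tsum_inv_shift_ge_of_ratio_ge_general Ψ θ hΨpos hΨderiv hθpos hprot
end

section
/- Let Ψ : (0, ∞) → (0, ∞) be an increasing, twice continuously differentiable function such that ∫_1^∞ du/Ψ(u) < ∞, liminf_{x→∞} Ψ'(x) = ∞, and the limit lim_{x→∞} Ψ''(x)Ψ(x)/Ψ'(x)² exists and is positive. Then liminf_{x→∞} Ψ(x) · (∫_x^∞ du/Ψ(u)²) / (∫_x^∞ du/Ψ(u)) > 0. -/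
open Filter MeasureTheory Set
open scoped Topology

/-!
Write `I₁(x) = ∫_x^∞ du/Ψ(u)` and `I₂(x) = ∫_x^∞ du/Ψ(u)²`. Both tails tend to `0`, and so do
`1/Ψ'` and `1/(ΨΨ')`; L'Hôpital's rule applied to these quotients, with
`Ψ''Ψ/Ψ'² → C > 0`, gives `I₁ Ψ' → 1/C` and `I₂ ΨΨ' → 1/(1 + C)`. Hence
`Ψ I₂ / I₁ → C/(1 + C) > 0`.
-/

lemma MeasureTheory.IntegrableOn.one_div_sq {α : Type*} [MeasurableSpace α] {μ : Measure α}
    {f : α → ℝ} {s : Set α} {c : ℝ} (hs : MeasurableSet s) (hc : 0 < c) (hf : ∀ x ∈ s, c ≤ f x)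
    (h : IntegrableOn (fun x => 1 / f x) s μ) : IntegrableOn (fun x => 1 / f x ^ 2) s μ := by
  have hbound : ∀ᵐ x ∂μ.restrict s, ‖1 / f x‖ ≤ 1 / c := by
    refine (ae_restrict_iff' hs).2 (ae_of_all _ fun x hx => ?_)
    rw [Real.norm_of_nonneg (one_div_pos.2 (hc.trans_le (hf x hx))).le]
    exact one_div_le_one_div_of_le hc (hf x hx)
  refine (h.bdd_mul h.aestronglyMeasurable hbound).congr (ae_of_all _ fun x => ?_)
  ring

section TailIntegral

variable {g : ℝ → ℝ} {a : ℝ}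

lemma tendsto_integral_Ioi_atTop_zero (hg : IntegrableOn g (Ioi a)) :
    Tendsto (fun x => ∫ u in Ioi x, g u) atTop (𝓝 0) := by
  have h := (intervalIntegral_tendsto_integral_Ioi a hg tendsto_id).const_sub
    (∫ u in Ioi a, g u)
  rw [sub_self] at h
  refine h.congr' ?_
  filter_upwards [eventually_ge_atTop a] with x hx
  rw [id_eq, ← intervalIntegral.integral_Ioi_sub_Ioi hg hx, sub_sub_cancel]

lemma hasDerivAt_integral_Ioi (hg : IntegrableOn g (Ioi a)) {x : ℝ} (hx : a < x)
    (hgx : ContinuousAt g x) : HasDerivAt (fun y => ∫ u in Ioi y, g u) (-g x) x := by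
  have hmeas : StronglyMeasurableAtFilter g (𝓝 x) :=
    AEStronglyMeasurable.stronglyMeasurableAtFilter_of_mem hg.aestronglyMeasurable
      (Ioi_mem_nhds hx)
  have hax : IntervalIntegrable g volume a x :=
    (intervalIntegrable_iff_integrableOn_Ioc_of_le hx.le).2 (hg.mono_set Ioc_subset_Ioi_self)
  refine ((intervalIntegral.integral_hasDerivAt_right hax hmeas hgx).const_sub
    (∫ u in Ioi a, g u)).congr_of_eventuallyEq ?_
  filter_upwards [Ioi_mem_nhds hx] with y hy
  rw [← intervalIntegral.integral_Ioi_sub_Ioi hg hy.le, sub_sub_cancel]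

lemma lhopital_integral_Ioi_atTop {h h' : ℝ → ℝ} {L : ℝ} (hg : IntegrableOn g (Ioi a))
    (hgc : ∀ᶠ x in atTop, ContinuousAt g x) (hh : ∀ᶠ x in atTop, HasDerivAt h (h' x) x)
    (hh' : ∀ᶠ x in atTop, h' x ≠ 0) (hh0 : Tendsto h atTop (𝓝 0))
    (hL : Tendsto (fun x => -g x / h' x) atTop (𝓝 L)) :
    Tendsto (fun x => (∫ u in Ioi x, g u) / h x) atTop (𝓝 L) := by
  refine HasDerivAt.lhopital_zero_atTop ?_ hh hh' (tendsto_integral_Ioi_atTop_zero hg) hh0 hL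
  filter_upwards [hgc, eventually_gt_atTop a] with x hgx hx
  exact hasDerivAt_integral_Ioi hg hx hgx

end TailIntegral

section TailAsymptotics

variable {Ψ Ψ' Ψ'' : ℝ → ℝ} {C a : ℝ}

lemma tendsto_integral_Ioi_one_div_mul_deriv (hΨ : ∀ᶠ x in atTop, ContinuousAt Ψ x)
    (hΨ'' : ∀ᶠ x in atTop, HasDerivAt Ψ' (Ψ'' x) x) (hΨ' : Tendsto Ψ' atTop atTop)
    (hC : Tendsto (fun x => Ψ'' x * Ψ x / Ψ' x ^ 2) atTop (𝓝 C)) (hC0 : C ≠ 0)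
    (hint : IntegrableOn (fun u => 1 / Ψ u) (Ioi a)) :
    Tendsto (fun x => (∫ u in Ioi x, 1 / Ψ u) * Ψ' x) atTop (𝓝 C⁻¹) := by
  have hne : ∀ᶠ x in atTop, Ψ'' x ≠ 0 ∧ Ψ x ≠ 0 ∧ Ψ' x ≠ 0 := by
    filter_upwards [hC.eventually_ne hC0] with x hx
    simp only [div_ne_zero_iff, mul_ne_zero_iff, pow_ne_zero_iff two_ne_zero] at hx
    exact ⟨hx.1.1, hx.1.2, hx.2⟩
  have hcont : ∀ᶠ x in atTop, ContinuousAt (fun u => 1 / Ψ u) x := by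
    filter_upwards [hΨ, hne] with x hx ⟨_, h2, _⟩ using continuousAt_const.div hx h2
  have hrecip : ∀ᶠ x in atTop, HasDerivAt (fun y => (Ψ' y)⁻¹) (-Ψ'' x / Ψ' x ^ 2) x := by
    filter_upwards [hΨ'', hne] with x hx ⟨_, _, h3⟩ using hx.inv h3
  have hrecip_ne : ∀ᶠ x in atTop, -Ψ'' x / Ψ' x ^ 2 ≠ 0 := by
    filter_upwards [hne] with x ⟨h1, _, h3⟩
    exact div_ne_zero (neg_ne_zero.2 h1) (pow_ne_zero 2 h3)
  have hquot : Tendsto (fun x => -(1 / Ψ x) / (-Ψ'' x / Ψ' x ^ 2)) atTop (𝓝 C⁻¹) := by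
    refine (hC.inv₀ hC0).congr' ?_
    filter_upwards [hne] with x ⟨h1, h2, h3⟩
    field_simp
  simpa only [div_inv_eq_mul] using
    lhopital_integral_Ioi_atTop hint hcont hrecip hrecip_ne hΨ'.inv_tendsto_atTop hquot

lemma tendsto_integral_Ioi_one_div_sq_mul (hΨ' : ∀ᶠ x in atTop, HasDerivAt Ψ (Ψ' x) x)
    (hΨ'' : ∀ᶠ x in atTop, HasDerivAt Ψ' (Ψ'' x) x)
    (hprod : Tendsto (fun x => Ψ x * Ψ' x) atTop atTop)
    (hC : Tendsto (fun x => Ψ'' x * Ψ x / Ψ' x ^ 2) atTop (𝓝 C)) (hC1 : 1 + C ≠ 0)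
    (hint : IntegrableOn (fun u => 1 / Ψ u ^ 2) (Ioi a)) :
    Tendsto (fun x => (∫ u in Ioi x, 1 / Ψ u ^ 2) * (Ψ x * Ψ' x)) atTop (𝓝 (1 + C)⁻¹) := by
  have hC' := tendsto_const_nhds (x := (1 : ℝ)) |>.add hC
  have hne : ∀ᶠ x in atTop, Ψ x ≠ 0 ∧ Ψ' x ≠ 0 ∧ Ψ' x * Ψ' x + Ψ x * Ψ'' x ≠ 0 := by
    filter_upwards [hprod.eventually_ne_atTop 0, hC'.eventually_ne hC1] with x hx hx1
    obtain ⟨h1, h2⟩ := mul_ne_zero_iff.1 hx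
    refine ⟨h1, h2, fun h => hx1 ?_⟩
    field_simp
    linear_combination h
  have hcont : ∀ᶠ x in atTop, ContinuousAt (fun u => 1 / Ψ u ^ 2) x := by
    filter_upwards [hΨ', hne] with x hx ⟨h1, _, _⟩
    exact continuousAt_const.div (hx.continuousAt.pow 2) (pow_ne_zero 2 h1)
  have hrecip : ∀ᶠ x in atTop, HasDerivAt (fun y => (Ψ y * Ψ' y)⁻¹)
      (-(Ψ' x * Ψ' x + Ψ x * Ψ'' x) / (Ψ x * Ψ' x) ^ 2) x := by
    filter_upwards [hΨ', hΨ'', hne] with x hx hx' ⟨h1, h2, _⟩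
    exact (hx.mul hx').inv (mul_ne_zero h1 h2)
  have hrecip_ne : ∀ᶠ x in atTop, -(Ψ' x * Ψ' x + Ψ x * Ψ'' x) / (Ψ x * Ψ' x) ^ 2 ≠ 0 := by
    filter_upwards [hne] with x ⟨h1, h2, h3⟩
    exact div_ne_zero (neg_ne_zero.2 h3) (pow_ne_zero 2 (mul_ne_zero h1 h2))
  have hquot : Tendsto (fun x => -(1 / Ψ x ^ 2) /
      (-(Ψ' x * Ψ' x + Ψ x * Ψ'' x) / (Ψ x * Ψ' x) ^ 2)) atTop (𝓝 (1 + C)⁻¹) := by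
    refine (hC'.inv₀ hC1).congr' ?_
    filter_upwards [hne] with x ⟨h1, h2, h3⟩
    field_simp
  simpa only [div_inv_eq_mul] using
    lhopital_integral_Ioi_atTop hint hcont hrecip hrecip_ne hprod.inv_tendsto_atTop hquot

end TailAsymptotics

/-- If `Ψ : (0,∞) → (0,∞)` is increasing and twice continuously differentiable with
`∫_1^∞ du/Ψ(u) < ∞`, `liminf_{x→∞} Ψ'(x) = ∞`, and `lim_{x→∞} Ψ''(x)Ψ(x)/Ψ'(x)²`
exists and is positive, then
`liminf_{x→∞} Ψ(x) · (∫_x^∞ du/Ψ(u)²) / (∫_x^∞ du/Ψ(u)) > 0`. -/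
theorem liminf_ratio_integral_inv_sq_pos
    (Ψ : ℝ → ℝ) (hpos : ∀ x > (0 : ℝ), 0 < Ψ x)
    (hmono : StrictMonoOn Ψ (Set.Ioi 0))
    (hsmooth : ContDiffOn ℝ 2 Ψ (Set.Ioi 0))
    (hint : MeasureTheory.IntegrableOn (fun u => 1 / Ψ u) (Set.Ioi 1))
    (hderiv : Tendsto (deriv Ψ) atTop atTop)
    (hsecond : ∃ C : ℝ, 0 < C ∧
      Tendsto (fun x : ℝ => deriv (deriv Ψ) x * Ψ x / (deriv Ψ x) ^ 2) atTop (𝓝 C)) :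
    0 < Filter.liminf (fun x : ℝ =>
        Ψ x * (∫ u in Set.Ioi x, 1 / (Ψ u) ^ 2) / ∫ u in Set.Ioi x, 1 / Ψ u) atTop := by
  obtain ⟨C, hC, hCt⟩ := hsecond
  have hΨ' : ∀ᶠ x in atTop, HasDerivAt Ψ (deriv Ψ x) x := by
    filter_upwards [eventually_gt_atTop 0] with x hx
    exact (hsmooth.differentiableOn two_ne_zero x hx).differentiableAt
      (Ioi_mem_nhds hx) |>.hasDerivAt
  have hΨ'' : ∀ᶠ x in atTop, HasDerivAt (deriv Ψ) (deriv (deriv Ψ) x) x := by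
    filter_upwards [eventually_gt_atTop 0] with x hx
    exact ((hsmooth.deriv_of_isOpen isOpen_Ioi (by norm_num)).differentiableOn one_ne_zero x
      hx).differentiableAt (Ioi_mem_nhds hx) |>.hasDerivAt
  have hΨ1 : ∀ x ∈ Ioi 1, Ψ 1 ≤ Ψ x := fun x hx =>
    (hmono (mem_Ioi.2 one_pos) (mem_Ioi.2 (one_pos.trans hx)) hx).le
  have hprod : Tendsto (fun x => Ψ x * deriv Ψ x) atTop atTop := by
    refine tendsto_atTop_mono' atTop ?_ (hderiv.const_mul_atTop (hpos 1 one_pos))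
    filter_upwards [eventually_gt_atTop 1, hderiv.eventually_ge_atTop 0] with x hx hx'
    exact mul_le_mul_of_nonneg_right (hΨ1 x hx) hx'
  have h₁ := tendsto_integral_Ioi_one_div_mul_deriv
    (hΨ'.mono fun x hx => hx.continuousAt) hΨ'' hderiv hCt hC.ne' hint
  have h₂ := tendsto_integral_Ioi_one_div_sq_mul hΨ' hΨ'' hprod hCt (by positivity)
    (hint.one_div_sq measurableSet_Ioi (hpos 1 one_pos) hΨ1)
  have hlim : Tendsto (fun x : ℝ =>
      Ψ x * (∫ u in Ioi x, 1 / Ψ u ^ 2) / ∫ u in Ioi x, 1 / Ψ u) atTop (𝓝 ((1 + C)⁻¹ / C⁻¹)) := by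
    refine (h₂.div h₁ (inv_ne_zero hC.ne')).congr' ?_
    filter_upwards [hderiv.eventually_gt_atTop 0] with x hx
    rw [Pi.div_apply, ← mul_div_mul_right (Ψ x * _) _ hx.ne']
    ring
  rw [hlim.liminf_eq]
  positivity
end
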